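/- arXiv:1303.3388 — 4 statements merged into one kernel-verified Lean document; each statement's English description precedes it below -/
import Mathlib

section
/- Let $1 \le s \le d_1 \le d_2 \le m$ be integers, and let $D_1, D_2$ be independent random subsets of $\{1,\dots,m\}$, with $D_i$ uniformly distributed over all subsets of size $d_i$. Then $\mathbb{P}(|D_1 \cap D_2| = s) \ge \left(1 - \frac{(d_1-s)(d_2-s)}{m+1-d_1}\right) \binom{d_1}{s}\binom{d_2}{s}\binom{m}{s}^{-1}$. -/
/-!
Conditioning on `D₁`, the probability is `C(d₁,s) C(m-d₁,d₂-s) / C(m,d₂)`. Using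
`C(m,d₂) C(d₂,s) = C(m,s) C(m-s,d₂-s)`, the bound reduces to
`(1 - n k / (a+1)) C(a+n,k) ≤ C(a,k)` with `a = m-d₁`, `n = d₁-s`, `k = d₂-s`, which follows by
induction on `n` from Pascal's rule and `(a+n+1) C(a+n,k) = (k+1) C(a+n+1,k+1)`.
-/

open Finset

theorem Nat.add_one_mul_choose_add_le (a n k : ℕ) :
    (a + 1) * (a + n).choose k ≤ (a + 1) * a.choose k + n * k * (a + n).choose k := by
  induction n with
  | zero => simp
  | succ n ih =>
    rcases k with _ | k
    · simp
    rw [← add_assoc, Nat.choose_succ_succ']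
    have habsorb := Nat.add_one_mul_choose_eq (a + n) k
    have hmono : n * (k + 1) * (a + n).choose (k + 1) ≤ n * (k + 1) * (a + n + 1).choose (k + 1) :=
      Nat.mul_le_mul_left _ (Nat.choose_le_choose _ (Nat.le_succ _))
    have hfactor : (a + 1) * (a + n).choose k ≤ (a + n + 1) * (a + n).choose k :=
      Nat.mul_le_mul_right _ (by omega)
    rw [Nat.choose_succ_succ'] at habsorb hmono
    linarith

theorem one_sub_mul_choose_add_le_choose (a n k : ℕ) :
    (1 - (n * k : ℝ) / (a + 1)) * (a + n).choose k ≤ a.choose k := by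
  have h := Nat.add_one_mul_choose_add_le a n k
  have ha : (0 : ℝ) < a + 1 := by positivity
  rw [one_sub_div ha.ne', div_mul_eq_mul_div, div_le_iff₀ ha]
  have hcast : ((a + 1) * (a + n).choose k : ℝ) ≤
      (a + 1) * a.choose k + n * k * (a + n).choose k := by
    exact_mod_cast h
  linarith

theorem card_filter_powersetCard_card_inter {α : Type*} [Fintype α] [DecidableEq α]
    (A : Finset α) {d s : ℕ} (hsd : s ≤ d) :
    #((univ.powersetCard d).filter (fun B => #(A ∩ B) = s))
      = (#A).choose s * (Fintype.card α - #A).choose (d - s) := by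
  rw [← card_compl, ← card_powersetCard, ← card_powersetCard, ← card_product]
  have hsplit (C D : Finset α) (hC : C ⊆ A) (hD : D ⊆ Aᶜ) :
      A ∩ (C ∪ D) = C ∧ (C ∪ D) \ A = D ∧ #(C ∪ D) = #C + #D := by
    have hAD : Disjoint A D := subset_compl_iff_disjoint_left.1 hD
    refine ⟨?_, ?_, card_union_of_disjoint (hAD.mono_left hC)⟩
    · rw [inter_union_distrib_left, inter_eq_right.2 hC, disjoint_iff_inter_eq_empty.1 hAD,
        union_empty]
    · rw [union_sdiff_distrib, sdiff_eq_empty_iff_subset.2 hC, hAD.symm.sdiff_eq_left,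
        empty_union]
  refine card_nbij' (fun B => (A ∩ B, B \ A)) (fun p => p.1 ∪ p.2) ?_ ?_ ?_ ?_
  · intro B hB
    simp only [coe_filter, mem_powersetCard, coe_product, Set.mem_prod, mem_coe] at hB ⊢
    obtain ⟨⟨-, rfl⟩, rfl⟩ := hB
    have hcard := card_inter_add_card_sdiff B A
    rw [inter_comm] at hcard
    exact ⟨⟨inter_subset_left, rfl⟩, fun x hx => by simp_all, by omega⟩
  · rintro ⟨C, D⟩ h
    simp only [coe_filter, mem_powersetCard, coe_product, Set.mem_prod, mem_coe] at h ⊢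
    obtain ⟨hA, -, hcard⟩ := hsplit C D h.1.1 h.2.1
    exact ⟨⟨subset_univ _, by omega⟩, by rw [hA, h.1.2]⟩
  · intro B _
    simp only
    rw [inter_comm, union_comm, sdiff_union_inter]
  · rintro ⟨C, D⟩ h
    simp only [coe_product, Set.mem_prod, mem_coe, mem_powersetCard] at h
    obtain ⟨hA, hAc, -⟩ := hsplit C D h.1.1 h.2.1
    simp only [hA, hAc]

theorem card_filter_card_inter_powersetCard_product {α : Type*} [Fintype α] [DecidableEq α]
    {d₁ d₂ s : ℕ} (hs : s ≤ d₂) :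
    #((univ.powersetCard d₁ ×ˢ univ.powersetCard d₂ : Finset (Finset α × Finset α)).filter
        (fun p => #(p.1 ∩ p.2) = s))
      = (Fintype.card α).choose d₁ * (d₁.choose s * (Fintype.card α - d₁).choose (d₂ - s)) := by
  have hfiber : ∀ A ∈ (univ.powersetCard d₁ : Finset (Finset α)),
      #((univ.powersetCard d₂).filter (fun B => #(A ∩ B) = s))
        = d₁.choose s * (Fintype.card α - d₁).choose (d₂ - s) := fun A hA => by
    rw [card_filter_powersetCard_card_inter A hs, (mem_powersetCard.1 hA).2]
  simp only [card_filter, sum_product] at hfiber ⊢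
  rw [sum_congr rfl hfiber, sum_const, card_powersetCard, card_univ, smul_eq_mul]

theorem stmt_1_general (m d₁ d₂ s : ℕ) (h1 : s ≤ d₁) (h2 : d₁ ≤ d₂) (h3 : d₂ ≤ m) :
    (1 - ((d₁ : ℝ) - s) * ((d₂ : ℝ) - s) / ((m : ℝ) + 1 - d₁)) *
      ((d₁.choose s : ℝ) * (d₂.choose s : ℝ) / (m.choose s : ℝ)) ≤
    (((Finset.univ.powersetCard d₁ ×ˢ Finset.univ.powersetCard d₂ :
        Finset (Finset (Fin m) × Finset (Fin m))).filter
        (fun p => (p.1 ∩ p.2).card = s)).card : ℝ) /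
      ((m.choose d₁ : ℝ) * (m.choose d₂ : ℝ)) := by
  have hd₁ : d₁ ≤ m := h2.trans h3
  have hsd₂ : s ≤ d₂ := h1.trans h2
  set L := 1 - ((d₁ : ℝ) - s) * ((d₂ : ℝ) - s) / ((m : ℝ) + 1 - d₁)
  have hkey : L * ((m - s).choose (d₂ - s) : ℝ) ≤ (m - d₁).choose (d₂ - s) := by
    have h := one_sub_mul_choose_add_le_choose (m - d₁) (d₁ - s) (d₂ - s)
    rw [show m - d₁ + (d₁ - s) = m - s by omega] at h
    push_cast [Nat.cast_sub h1, Nat.cast_sub hd₁, Nat.cast_sub hsd₂] at h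
    rwa [sub_add_eq_add_sub] at h
  have hchoose : (m.choose d₂ : ℝ) * d₂.choose s = m.choose s * (m - s).choose (d₂ - s) := by
    exact_mod_cast Nat.choose_mul (n := m) hsd₂
  have hms : (0 : ℝ) < m.choose s := by exact_mod_cast Nat.choose_pos (h1.trans hd₁)
  have hmd₁ : (0 : ℝ) < m.choose d₁ := by exact_mod_cast Nat.choose_pos hd₁
  have hmd₂ : (0 : ℝ) < m.choose d₂ := by exact_mod_cast Nat.choose_pos h3
  rw [card_filter_card_inter_powersetCard_product hsd₂, Fintype.card_fin]
  push_cast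
  rw [mul_div_mul_left _ _ hmd₁.ne', le_div_iff₀ hmd₂]
  calc L * ((d₁.choose s : ℝ) * d₂.choose s / m.choose s) * m.choose d₂
      = L * d₁.choose s * (m.choose d₂ * d₂.choose s) / m.choose s := by ring
    _ = d₁.choose s * (L * (m - s).choose (d₂ - s)) := by rw [hchoose]; field_simp
    _ ≤ d₁.choose s * (m - d₁).choose (d₂ - s) := by gcongr

/-- For independent uniform random subsets `D₁, D₂` of `{1,…,m}` of sizes `d₁ ≤ d₂`,
the probability that `|D₁ ∩ D₂| = s` is at least
`(1 - (d₁-s)(d₂-s)/(m+1-d₁)) · C(d₁,s) C(d₂,s) / C(m,s)`. -/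
theorem stmt_1 (m d₁ d₂ s : ℕ) (hs : 1 ≤ s) (h1 : s ≤ d₁) (h2 : d₁ ≤ d₂) (h3 : d₂ ≤ m) :
    (1 - ((d₁ : ℝ) - s) * ((d₂ : ℝ) - s) / ((m : ℝ) + 1 - d₁)) *
      ((d₁.choose s : ℝ) * (d₂.choose s : ℝ) / (m.choose s : ℝ)) ≤
    (((Finset.univ.powersetCard d₁ ×ˢ Finset.univ.powersetCard d₂ :
        Finset (Finset (Fin m) × Finset (Fin m))).filter
        (fun p => (p.1 ∩ p.2).card = s)).card : ℝ) /
      ((m.choose d₁ : ℝ) * (m.choose d₂ : ℝ)) :=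
  stmt_1_general m d₁ d₂ s h1 h2 h3
end

section
/- Let $S = I_1 + I_2 + \cdots + I_n$ be a sum of independent Bernoulli random indicators with $\mathbb{P}(I_i = 1) = p_i$, and let $\Lambda$ be a Poisson random variable with mean $p_1 + \cdots + p_n$. Then the total variation distance between the distribution of $S$ and the distribution of $\Lambda$ is at most $2\sum_i p_i^2$. -/
/-!
Closeness in total variation is preserved when both measures are convolved with the same
probability measure `ν`, because `(ν ∗ P) A = ∫ P (A - x) dν(x)`, and it adds up along chains.
The law of `S` is the convolution of the Bernoulli laws `Ber(pᵢ)` and `Po(∑ pᵢ)` is the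
convolution of the `Po(pᵢ)`, so replacing the factors one at a time costs at most
`∑ d(Ber(pᵢ), Po(pᵢ))`. On `ℕ`, `Ber(q)` has less mass than `Po(q)` at `0` and the excess
`q - q e^{-q} ≤ q²` at `1`, so `d(Ber(q), Po(q)) ≤ q²`; this gives `∑ pᵢ²`, half the stated bound.
-/

open MeasureTheory ProbabilityTheory
open scoped ENNReal NNReal

namespace MeasureTheory.Measure

variable {α : Type*} [MeasurableSpace α]

/-- Total variation distance at most `ε`, stated set by set in `ℝ≥0∞` so that neither
subtraction nor a supremum is involved. -/
def TVClose (P Q : Measure α) (ε : ℝ≥0∞) : Prop :=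
  ∀ A, MeasurableSet A → P A ≤ Q A + ε ∧ Q A ≤ P A + ε

namespace TVClose

variable {P Q R : Measure α} {ε δ : ℝ≥0∞}

lemma refl (P : Measure α) : TVClose P P 0 := fun A _ => by simp

lemma mono (h : TVClose P Q ε) (hεδ : ε ≤ δ) : TVClose P Q δ := fun A hA =>
  ⟨(h A hA).1.trans (by gcongr), (h A hA).2.trans (by gcongr)⟩

lemma trans (hPQ : TVClose P Q ε) (hQR : TVClose Q R δ) : TVClose P R (ε + δ) := fun A hA =>
  ⟨calc P A ≤ Q A + ε := (hPQ A hA).1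
      _ ≤ R A + δ + ε := by gcongr; exact (hQR A hA).1
      _ = R A + (ε + δ) := by ring,
   calc R A ≤ Q A + δ := (hQR A hA).2
      _ ≤ P A + ε + δ := by gcongr; exact (hPQ A hA).2
      _ = P A + (ε + δ) := by ring⟩

lemma abs_measureReal_sub_le [IsFiniteMeasure P] [IsFiniteMeasure Q] (h : TVClose P Q ε)
    (hε : ε ≠ ∞) {A : Set α} (hA : MeasurableSet A) : |P.real A - Q.real A| ≤ ε.toReal := by
  obtain ⟨hPQ, hQP⟩ := h A hA
  rw [abs_sub_le_iff, sub_le_iff_le_add', sub_le_iff_le_add']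
  constructor
  · rw [measureReal_def, measureReal_def, ← ENNReal.toReal_add (measure_ne_top _ _) hε]
    exact ENNReal.toReal_mono (by finiteness) hPQ
  · rw [measureReal_def, measureReal_def, ← ENNReal.toReal_add (measure_ne_top _ _) hε]
    exact ENNReal.toReal_mono (by finiteness) hQP

end TVClose

section Convolution

variable {M : Type*} [AddMonoid M] [MeasurableSpace M] [MeasurableAdd₂ M]

lemma conv_apply_le_conv_apply_add {P Q ν : Measure M} [SFinite P] [SFinite Q]
    [IsProbabilityMeasure ν] {ε : ℝ≥0∞} (h : ∀ A, MeasurableSet A → P A ≤ Q A + ε)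
    {A : Set M} (hA : MeasurableSet A) : (ν ∗ P) A ≤ (ν ∗ Q) A + ε := by
  have hA' : MeasurableSet ((fun z : M × M => z.1 + z.2) ⁻¹' A) := measurable_add hA
  simp only [Measure.conv, map_apply measurable_add hA, prod_apply hA']
  calc _ ≤ ∫⁻ x, (Q (Prod.mk x ⁻¹' ((fun z : M × M => z.1 + z.2) ⁻¹' A)) + ε) ∂ν :=
        lintegral_mono fun x => h _ (measurable_prodMk_left hA')
    _ = _ := by rw [lintegral_add_right _ measurable_const, lintegral_const, measure_univ, mul_one]

lemma TVClose.conv_left {P Q : Measure M} [SFinite P] [SFinite Q] {ε : ℝ≥0∞}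
    (h : TVClose P Q ε) (R : Measure M) [IsProbabilityMeasure R] : TVClose (R ∗ P) (R ∗ Q) ε :=
  fun _ hA => ⟨conv_apply_le_conv_apply_add (fun B hB => (h B hB).1) hA,
    conv_apply_le_conv_apply_add (fun B hB => (h B hB).2) hA⟩

lemma TVClose.conv_right {M : Type*} [AddCommMonoid M] [MeasurableSpace M] [MeasurableAdd₂ M]
    {P Q : Measure M} [SFinite P] [SFinite Q] {ε : ℝ≥0∞}
    (h : TVClose P Q ε) (R : Measure M) [IsProbabilityMeasure R] : TVClose (P ∗ R) (Q ∗ R) ε := by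
  rw [conv_comm P, conv_comm Q]
  exact h.conv_left R

end Convolution

section Discrete

variable {α : Type*} [MeasurableSpace α] [Countable α] [MeasurableSingletonClass α]

lemma apply_le_apply_add_tsum_tsub (P Q : Measure α) {A : Set α} (hA : MeasurableSet A) :
    P A ≤ Q A + ∑' x, (P {x} - Q {x}) := by
  rw [← tsum_indicator_apply_singleton P A hA, ← tsum_indicator_apply_singleton Q A hA,
    ← ENNReal.tsum_add]
  refine ENNReal.tsum_le_tsum fun x => ?_
  by_cases hx : x ∈ A
  · simpa only [Set.indicator_of_mem hx] using le_add_tsub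
  · simp [hx]

lemma tsum_measure_singleton_tsub_comm (P Q : Measure α) [IsProbabilityMeasure P]
    [IsProbabilityMeasure Q] : ∑' x, (P {x} - Q {x}) = ∑' x, (Q {x} - P {x}) := by
  have h_mass (R : Measure α) [IsProbabilityMeasure R] : ∑' x, R {x} = 1 := by
    simpa using tsum_indicator_apply_singleton R Set.univ MeasurableSet.univ
  have h : ∑' x, (P {x} - Q {x}) + ∑' x, Q {x} = ∑' x, (Q {x} - P {x}) + ∑' x, P {x} := by
    simp only [← ENNReal.tsum_add, tsub_add_eq_max, max_comm]
  rwa [h_mass P, h_mass Q, ENNReal.add_left_inj ENNReal.one_ne_top] at h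

lemma tvClose_tsum_tsub (P Q : Measure α) [IsProbabilityMeasure P] [IsProbabilityMeasure Q] :
    TVClose P Q (∑' x, (P {x} - Q {x})) := fun _ hA =>
  ⟨apply_le_apply_add_tsum_tsub P Q hA,
    tsum_measure_singleton_tsub_comm P Q ▸ apply_le_apply_add_tsum_tsub Q P hA⟩

end Discrete

end MeasureTheory.Measure

open MeasureTheory Measure

namespace ProbabilityTheory

lemma poissonMeasure_zero : poissonMeasure 0 = dirac 0 := by
  refine ext_iff_singleton.mpr fun n => ?_
  rcases n with _ | n <;> simp [poissonMeasure_singleton]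

variable {Ω : Type*} [MeasurableSpace Ω] {μ : Measure Ω} [IsProbabilityMeasure μ]

lemma tvClose_map_poissonMeasure_of_zero_or_one {X : Ω → ℕ} (hX : Measurable X)
    (h01 : ∀ ω, X ω = 0 ∨ X ω = 1) {q : ℝ≥0} (hq : μ (X ⁻¹' {1}) = q) :
    TVClose (μ.map X) (poissonMeasure q) ((q : ℝ≥0∞) ^ 2) := by
  have : IsProbabilityMeasure (μ.map X) := isProbabilityMeasure_map hX.aemeasurable
  have h_exp : 1 - (q : ℝ) ≤ Real.exp (-q) := by linarith [Real.add_one_le_exp (-(q : ℝ))]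
  refine (tvClose_tsum_tsub _ _).mono ?_
  have h_off : ∀ k ≠ 1, μ.map X {k} - poissonMeasure q {k} = 0 := by
    intro k hk
    rw [map_apply hX (measurableSet_singleton k), tsub_eq_zero_iff_le]
    rcases k with _ | _ | k
    · have h_compl : X ⁻¹' {0} = (X ⁻¹' {1})ᶜ := by
        ext ω; rcases h01 ω with h | h <;> simp [h]
      rw [h_compl, prob_compl_eq_one_sub (hX (measurableSet_singleton 1)), hq,
        poissonMeasure_singleton, tsub_le_iff_right, ← ENNReal.ofReal_coe_nnreal,
        ← ENNReal.ofReal_add (by positivity) q.coe_nonneg, ← ENNReal.ofReal_one]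
      exact ENNReal.ofReal_le_ofReal (by simpa using h_exp)
    · exact absurd rfl hk
    · have h_empty : X ⁻¹' {k + 2} = ∅ := by
        ext ω; rcases h01 ω with h | h <;> simp [h]
      simp [h_empty]
  rw [tsum_eq_single 1 h_off, map_apply hX (measurableSet_singleton 1), hq, poissonMeasure_singleton, tsub_le_iff_right, ← ENNReal.ofReal_coe_nnreal,
    ← ENNReal.ofReal_pow q.coe_nonneg, ← ENNReal.ofReal_add (by positivity) (by positivity)]
  refine ENNReal.ofReal_le_ofReal ?_
  simp only [pow_one, Nat.factorial_one, Nat.cast_one, div_one]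
  nlinarith [q.coe_nonneg]

lemma tvClose_map_sum_poissonMeasure {ι : Type*} {I : ι → Ω → ℕ} {p : ι → ℝ≥0}
    (hmeas : ∀ i, Measurable (I i)) (hindep : iIndepFun I μ)
    (h01 : ∀ i ω, I i ω = 0 ∨ I i ω = 1) (hp : ∀ i, μ {ω | I i ω = 1} = p i) (s : Finset ι) :
    TVClose (μ.map (∑ i ∈ s, I i)) (poissonMeasure (∑ i ∈ s, p i))
      (∑ i ∈ s, (p i : ℝ≥0∞) ^ 2) := by
  classical
  induction s using Finset.induction_on with
  | empty =>
    rw [Finset.sum_empty, Finset.sum_empty, Finset.sum_empty, Pi.zero_def, Measure.map_const,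
      measure_univ, one_smul, poissonMeasure_zero]
    exact TVClose.refl _
  | insert i s hi ih =>
    have h_sum : Measurable (∑ j ∈ s, I j) := by
      simpa only [Finset.sum_fn] using Finset.measurable_sum s fun j _ => hmeas j
    have : IsProbabilityMeasure (μ.map (I i)) := isProbabilityMeasure_map (hmeas i).aemeasurable
    have : IsProbabilityMeasure (μ.map (∑ j ∈ s, I j)) :=
      isProbabilityMeasure_map h_sum.aemeasurable
    rw [Finset.sum_insert hi, Finset.sum_insert hi, Finset.sum_insert hi,
      (hindep.indepFun_finsetSum_of_notMem hmeas hi).symm.map_add_eq_map_conv_map (hmeas i) h_sum,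
      ← poissonMeasure_conv_poissonMeasure]
    exact ((tvClose_map_poissonMeasure_of_zero_or_one (hmeas i) (h01 i) (hp i)).conv_right _).trans
      (ih.conv_left _)

end ProbabilityTheory

/-- LeCam's lemma: if `S = I₁ + ⋯ + Iₙ` is a sum of independent Bernoulli indicators with
`P(Iᵢ = 1) = pᵢ`, and `Λ` is Poisson with mean `∑ pᵢ`, then the total variation distance
between the laws of `S` and `Λ` is at most `2 ∑ pᵢ²`. -/
theorem stmt_2 {Ω : Type*} [MeasurableSpace Ω] (μ : Measure Ω) [IsProbabilityMeasure μ]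
    (n : ℕ) (I : Fin n → Ω → ℕ) (p : Fin n → NNReal)
    (hmeas : ∀ i, Measurable (I i))
    (hindep : iIndepFun I μ)
    (hBer : ∀ i ω, I i ω = 0 ∨ I i ω = 1)
    (hp : ∀ i, μ {ω | I i ω = 1} = ENNReal.ofNNReal (p i)) :
    ∀ A : Set ℕ,
      |(μ.map (fun ω => ∑ i, I i ω) A).toReal - (poissonMeasure (∑ i, p i) A).toReal| ≤
        2 * ∑ i, (p i : ℝ) ^ 2 := by
  intro A
  have h_meas : Measurable (∑ i, I i) := by
    simpa only [Finset.sum_fn] using Finset.measurable_sum Finset.univ fun i _ => hmeas i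
  have : IsProbabilityMeasure (μ.map (∑ i, I i)) := isProbabilityMeasure_map h_meas.aemeasurable
  have h_tv := tvClose_map_sum_poissonMeasure hmeas hindep hBer hp Finset.univ
  have h_abs := h_tv.abs_measureReal_sub_le (ENNReal.sum_ne_top.2 fun i _ => by finiteness)
    (MeasurableSet.of_discrete (s := A))
  have h_toReal : (∑ i, (p i : ℝ≥0∞) ^ 2).toReal = ∑ i, (p i : ℝ) ^ 2 := by
    simp [ENNReal.toReal_sum]
  rw [← Finset.sum_fn]
  exact h_abs.trans (h_toReal ▸ le_mul_of_one_le_left (by positivity) one_le_two)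
end

section
/- Let $\{X_{n1},\dots,X_{nn}\}_{n\ge1}$ be a triangular array where for each $n$ the random variables $X_{n1},\dots,X_{nn}$ are i.i.d., nonnegative, with finite mean. Suppose $X_{n1}$ converges in distribution to a random variable $Z$ with $\mathbb{E}Z < \infty$ and $\lim_n \mathbb{E}X_{n1} = \mathbb{E}Z$. Then for every $\alpha > 1$, the normalized sum $S_\alpha = n^{-\alpha}(X_{n1}^\alpha + \cdots + X_{nn}^\alpha)$ converges to $0$ in probability. -/
/-!
If every `X n i` stays below `c n`, then `n^{-α} ∑ X n i ^ α ≤ c^{α-1} (∑ X n i) / n`, and by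
Markov's inequality this exceeds `ε` with probability at most `c^{α-1} E X n 0 / ε`; otherwise
some `X n i ≥ c n`, an event of probability at most `n P(X n 0 ≥ c n)`. The latter tends to `0`
for every fixed `c > 0` because the `X n 0` are uniformly integrable: with `x ∧ K` bounded and
continuous, `E X n 0 - E (X n 0 ∧ K) → E Z - E (Z ∧ K)`, which is small for large `K`.
Taking `c` small then makes the first bound small.
-/

open MeasureTheory ProbabilityTheory Filter Topology
open scoped BoundedContinuousFunction

noncomputable def boundedTruncation (K : ℝ) : ℝ →ᵇ ℝ :=
  BoundedContinuousFunction.ofNormedAddCommGroup (fun x => max (min x K) 0) (by fun_prop) |K|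
    fun x => by
      rw [Real.norm_eq_abs, abs_of_nonneg (le_max_right _ _)]
      exact max_le ((min_le_right _ _).trans (le_abs_self K)) (abs_nonneg K)

lemma boundedTruncation_apply (K x : ℝ) : boundedTruncation K x = max (min x K) 0 := rfl

lemma boundedTruncation_le_self {K x : ℝ} (hx : 0 ≤ x) : boundedTruncation K x ≤ x :=
  max_le (min_le_left _ _) hx

lemma boundedTruncation_le {K : ℝ} (hK : 0 ≤ K) (x : ℝ) : boundedTruncation K x ≤ K :=
  max_le (min_le_right _ _) hK

lemma tendsto_boundedTruncation (x : ℝ) :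
    Tendsto (fun K => boundedTruncation K x) atTop (𝓝 (max x 0)) :=
  tendsto_const_nhds.congr' <| (eventually_ge_atTop x).mono fun K hK => by
    simp only [boundedTruncation_apply, min_eq_left hK]

section Truncation

variable {Ω : Type*} [MeasurableSpace Ω] {μ : Measure Ω} {f : Ω → ℝ}

lemma BoundedContinuousFunction.integrable_comp {α E : Type*} [TopologicalSpace α]
    [NormedAddCommGroup E] [IsFiniteMeasure μ] (g : α →ᵇ E) {h : Ω → α}
    (hh : AEStronglyMeasurable h μ) : Integrable (fun ω => g (h ω)) μ :=
  .of_bound (g.continuous.comp_aestronglyMeasurable hh) ‖g‖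
    (ae_of_all _ fun ω => g.norm_coe_le_norm (h ω))

lemma tendsto_integral_boundedTruncation (hf : Integrable f μ) :
    Tendsto (fun K => ∫ ω, boundedTruncation K (f ω) ∂μ) atTop (𝓝 (∫ ω, max (f ω) 0 ∂μ)) := by
  refine tendsto_integral_filter_of_dominated_convergence (fun ω => |f ω|)
    (.of_forall fun K => (boundedTruncation K).continuous.comp_aestronglyMeasurable hf.1)
    (.of_forall fun K => ae_of_all _ fun ω => ?_) hf.abs
    (ae_of_all _ fun ω => tendsto_boundedTruncation (f ω))
  rw [boundedTruncation_apply, Real.norm_eq_abs, abs_of_nonneg (le_max_right _ _)]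
  exact max_le ((min_le_left _ _).trans (le_abs_self _)) (abs_nonneg _)

lemma measureReal_ge_le_integral_sub_boundedTruncation [IsFiniteMeasure μ] (hf0 : ∀ ω, 0 ≤ f ω)
    (hf : Integrable f μ) {K t : ℝ} (hK : 0 ≤ K) (hKt : K < t) :
    μ.real {ω | t ≤ f ω} ≤
      ((∫ ω, f ω ∂μ) - ∫ ω, boundedTruncation K (f ω) ∂μ) / (t - K) := by
  have htrunc := (boundedTruncation K).integrable_comp hf.1
  have hsub : {ω | t ≤ f ω} ⊆ {ω | t - K ≤ f ω - boundedTruncation K (f ω)} := fun ω hω => by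
    have := boundedTruncation_le hK (f ω)
    simp only [Set.mem_ofPred_eq] at hω ⊢
    linarith
  rw [le_div_iff₀ (sub_pos.2 hKt), mul_comm, ← integral_sub hf htrunc]
  exact (mul_le_mul_of_nonneg_left (measureReal_mono hsub) (sub_pos.2 hKt).le).trans
    (mul_meas_ge_le_integral_of_nonneg
      (ae_of_all _ fun ω => sub_nonneg.2 (boundedTruncation_le_self (hf0 ω))) (hf.sub htrunc) _)

end Truncation

section ConvergenceOfMeans

variable {Ω : ℕ → Type*} [∀ n, MeasurableSpace (Ω n)] {μ : ∀ n, Measure (Ω n)}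
  {Ω' : Type*} [MeasurableSpace Ω'] {ν : Measure Ω'} {X : ∀ n, Ω n → ℝ} {Z : Ω' → ℝ}

lemma exists_integral_sub_boundedTruncation_lt (hZ : Integrable Z ν)
    (hdistr : ∀ f : ℝ →ᵇ ℝ,
      Tendsto (fun n => ∫ ω, f (X n ω) ∂(μ n)) atTop (𝓝 (∫ ω, f (Z ω) ∂ν)))
    (hmean : Tendsto (fun n => ∫ ω, X n ω ∂(μ n)) atTop (𝓝 (∫ ω, Z ω ∂ν)))
    {η : ℝ} (hη : 0 < η) :
    ∃ K, 0 ≤ K ∧ ∀ᶠ n in atTop,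
      (∫ ω, X n ω ∂(μ n)) - ∫ ω, boundedTruncation K (X n ω) ∂(μ n) < η := by
  have hpos : ∫ ω, Z ω ∂ν ≤ ∫ ω, max (Z ω) 0 ∂ν :=
    integral_mono hZ hZ.pos_part fun ω => le_max_left _ _
  obtain ⟨K, hKZ, hK⟩ := (((tendsto_integral_boundedTruncation hZ).eventually_const_lt
    (show ∫ ω, Z ω ∂ν - η < ∫ ω, max (Z ω) 0 ∂ν by linarith)).and
    (eventually_ge_atTop 0)).exists
  exact ⟨K, hK, (hmean.sub (hdistr (boundedTruncation K))).eventually_lt_const (by linarith)⟩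

lemma tendsto_mul_measureReal_ge_mul [∀ n, IsFiniteMeasure (μ n)] (hX0 : ∀ n ω, 0 ≤ X n ω)
    (hX : ∀ᶠ n in atTop, Integrable (X n) (μ n)) (hZ : Integrable Z ν)
    (hdistr : ∀ f : ℝ →ᵇ ℝ,
      Tendsto (fun n => ∫ ω, f (X n ω) ∂(μ n)) atTop (𝓝 (∫ ω, f (Z ω) ∂ν)))
    (hmean : Tendsto (fun n => ∫ ω, X n ω ∂(μ n)) atTop (𝓝 (∫ ω, Z ω ∂ν)))
    {c : ℝ} (hc : 0 < c) :
    Tendsto (fun n : ℕ => n * (μ n).real {ω | c * n ≤ X n ω}) atTop (𝓝 0) := by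
  refine tendsto_order.2 ⟨fun a ha => .of_forall fun n => ha.trans_le (by positivity),
    fun δ hδ => ?_⟩
  obtain ⟨K, hK, hgap⟩ := exists_integral_sub_boundedTruncation_lt hZ hdistr hmean
    (show 0 < c * δ / 4 by positivity)
  have hlarge : ∀ᶠ n : ℕ in atTop, 2 * K ≤ c * n :=
    (tendsto_natCast_atTop_atTop.const_mul_atTop hc).eventually_ge_atTop _
  filter_upwards [hX, hgap, hlarge, eventually_gt_atTop 0] with n hXn hgapn hn hn0
  have hn0' : (0 : ℝ) < n := by exact_mod_cast hn0
  have hKt : K < c * n := by nlinarith [mul_pos hc hn0']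
  calc (n : ℝ) * (μ n).real {ω | c * n ≤ X n ω}
      ≤ n * (((∫ ω, X n ω ∂(μ n)) - ∫ ω, boundedTruncation K (X n ω) ∂(μ n)) / (c * n - K)) :=
        mul_le_mul_of_nonneg_left
          (measureReal_ge_le_integral_sub_boundedTruncation (hX0 n) hXn hK hKt) hn0'.le
    _ ≤ n * (c * δ / 4 / (c * n - K)) := by gcongr
    _ ≤ δ / 2 := by
        rw [← mul_div_assoc, div_le_iff₀ (by linarith)]
        nlinarith [mul_pos hc hδ]
    _ < δ := half_lt_self hδ

end ConvergenceOfMeans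

lemma sum_rpow_le_rpow_mul_sum {ι : Type*} {s : Finset ι} {x : ι → ℝ} {b α : ℝ} (hα : 1 ≤ α)
    (hx0 : ∀ i ∈ s, 0 ≤ x i) (hxb : ∀ i ∈ s, x i ≤ b) :
    ∑ i ∈ s, x i ^ α ≤ b ^ (α - 1) * ∑ i ∈ s, x i := by
  rw [Finset.mul_sum]
  refine Finset.sum_le_sum fun i hi => ?_
  calc x i ^ α = x i ^ (α - 1) * x i := by
        rw [← Real.rpow_add_one' (hx0 i hi) (by linarith), sub_add_cancel]
    _ ≤ b ^ (α - 1) * x i :=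
        mul_le_mul_of_nonneg_right (Real.rpow_le_rpow (hx0 i hi) (hxb i hi) (by linarith))
          (hx0 i hi)

lemma rpow_neg_mul_sum_rpow_le {ι : Type*} {s : Finset ι} {x : ι → ℝ} {n c α : ℝ} (hn : 0 < n)
    (hc : 0 < c) (hα : 1 ≤ α) (hx0 : ∀ i ∈ s, 0 ≤ x i) (hxb : ∀ i ∈ s, x i ≤ c * n) :
    n ^ (-α) * ∑ i ∈ s, x i ^ α ≤ c ^ (α - 1) * ((∑ i ∈ s, x i) / n) := by
  have hscale : n ^ (-α) * (c * n) ^ (α - 1) = c ^ (α - 1) / n := by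
    rw [Real.mul_rpow hc.le hn.le, mul_left_comm, ← Real.rpow_add hn, neg_add_eq_sub,
      sub_sub_cancel_left, Real.rpow_neg_one, div_eq_mul_inv]
  calc n ^ (-α) * ∑ i ∈ s, x i ^ α ≤ n ^ (-α) * ((c * n) ^ (α - 1) * ∑ i ∈ s, x i) :=
        mul_le_mul_of_nonneg_left (sum_rpow_le_rpow_mul_sum hα hx0 hxb) (by positivity)
    _ = c ^ (α - 1) * ((∑ i ∈ s, x i) / n) := by rw [← mul_assoc, hscale]; ring

section IdenticallyDistributedRow

variable {Ω : Type*} [MeasurableSpace Ω] {μ : Measure Ω} {X : ℕ → Ω → ℝ} {n : ℕ}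

lemma integral_normalized_sum_eq (hn : 0 < n) (hident : ∀ i < n, IdentDistrib (X i) (X 0) μ μ)
    (hint : Integrable (X 0) μ) :
    ∫ ω, (∑ i ∈ Finset.range n, X i ω) / n ∂μ = ∫ ω, X 0 ω ∂μ := by
  have hn' : (n : ℝ) ≠ 0 := by positivity
  rw [integral_div, integral_finsetSum _ fun i hi =>
      (hident i (Finset.mem_range.1 hi)).integrable_iff.2 hint,
    Finset.sum_congr rfl fun i hi => (hident i (Finset.mem_range.1 hi)).integral_eq,
    Finset.sum_const, Finset.card_range, nsmul_eq_mul, mul_div_cancel_left₀ _ hn']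

lemma sum_measureReal_ge_eq (hident : ∀ i < n, IdentDistrib (X i) (X 0) μ μ) (t : ℝ) :
    ∑ i ∈ Finset.range n, μ.real {ω | t ≤ X i ω} = n * μ.real {ω | t ≤ X 0 ω} := by
  have heq i (hi : i ∈ Finset.range n) : μ.real {ω | t ≤ X i ω} = μ.real {ω | t ≤ X 0 ω} :=
    congrArg ENNReal.toReal ((hident i (Finset.mem_range.1 hi)).measure_mem_eq measurableSet_Ici)
  rw [Finset.sum_congr rfl heq, Finset.sum_const, Finset.card_range, nsmul_eq_mul]

lemma measureReal_lt_rpow_neg_mul_sum_rpow_le [IsFiniteMeasure μ] (hn : 0 < n)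
    (hX0 : ∀ i ω, 0 ≤ X i ω) (hident : ∀ i < n, IdentDistrib (X i) (X 0) μ μ)
    (hint : Integrable (X 0) μ) {α ε c : ℝ} (hα : 1 ≤ α) (hε : 0 < ε) (hc : 0 < c) :
    μ.real {ω | ε < (n : ℝ) ^ (-α) * ∑ i ∈ Finset.range n, X i ω ^ α} ≤
      n * μ.real {ω | c * n ≤ X 0 ω} + c ^ (α - 1) * (∫ ω, X 0 ω ∂μ) / ε := by
  have hn' : (0 : ℝ) < n := by exact_mod_cast hn
  set scaledMean : Ω → ℝ := fun ω => c ^ (α - 1) * ((∑ i ∈ Finset.range n, X i ω) / n)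
  have hsub : {ω | ε < (n : ℝ) ^ (-α) * ∑ i ∈ Finset.range n, X i ω ^ α} ⊆
      (⋃ i ∈ Finset.range n, {ω | c * n ≤ X i ω}) ∪ {ω | ε ≤ scaledMean ω} := by
    intro ω hω
    by_cases hbig : ∃ i ∈ Finset.range n, c * n ≤ X i ω
    · obtain ⟨i, hi, hXi⟩ := hbig
      exact Or.inl (Set.mem_biUnion hi hXi)
    · push Not at hbig
      exact Or.inr (hω.le.trans (rpow_neg_mul_sum_rpow_le hn' hc hα (fun i _ => hX0 i ω)
        fun i hi => (hbig i hi).le))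
  have hmarkov : μ.real {ω | ε ≤ scaledMean ω} ≤ c ^ (α - 1) * (∫ ω, X 0 ω ∂μ) / ε := by
    have hscaledMean : Integrable scaledMean μ := ((integrable_finsetSum _ fun i hi =>
      (hident i (Finset.mem_range.1 hi)).integrable_iff.2 hint).div_const _).const_mul _
    rw [le_div_iff₀ hε, mul_comm, ← integral_normalized_sum_eq hn hident hint,
      ← integral_const_mul]
    refine mul_meas_ge_le_integral_of_nonneg (ae_of_all _ fun ω => ?_) hscaledMean ε
    exact mul_nonneg (by positivity) (div_nonneg (Finset.sum_nonneg fun i _ => hX0 i ω) hn'.le)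
  calc _ ≤ μ.real (⋃ i ∈ Finset.range n, {ω | c * n ≤ X i ω}) + μ.real {ω | ε ≤ scaledMean ω} :=
        (measureReal_mono hsub).trans (measureReal_union_le _ _)
    _ ≤ n * μ.real {ω | c * n ≤ X 0 ω} + c ^ (α - 1) * (∫ ω, X 0 ω ∂μ) / ε := by
        gcongr
        rw [← sum_measureReal_ge_eq hident]
        exact measureReal_biUnion_finset_le _ _

end IdenticallyDistributedRow

theorem stmt_5_general {Ω : ℕ → Type*} [∀ n, MeasurableSpace (Ω n)]
    (μ : ∀ n, Measure (Ω n)) [∀ n, IsProbabilityMeasure (μ n)]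
    {Ω' : Type*} [MeasurableSpace Ω'] (ν : Measure Ω')
    (X : (n : ℕ) → ℕ → Ω n → ℝ) (Z : Ω' → ℝ)
    (hmeas : ∀ n i, Measurable (X n i))
    (hnonneg : ∀ n i ω, 0 ≤ X n i ω)
    (hident : ∀ n, ∀ i < n, (μ n).map (X n i) = (μ n).map (X n 0))
    (hint : ∀ n, 0 < n → Integrable (X n 0) (μ n))
    (hZint : Integrable Z ν)
    (hdistr : ∀ f : BoundedContinuousFunction ℝ ℝ,
      Tendsto (fun n => ∫ ω, f (X n 0 ω) ∂(μ n)) atTop (nhds (∫ ω, f (Z ω) ∂ν)))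
    (hmean : Tendsto (fun n => ∫ ω, X n 0 ω ∂(μ n)) atTop (nhds (∫ ω, Z ω ∂ν))) :
    ∀ α : ℝ, 1 < α → ∀ ε : ℝ, 0 < ε →
      Tendsto (fun n =>
          ((μ n) {ω | ε < (n : ℝ) ^ (-α) * ∑ i ∈ Finset.range n, X n i ω ^ α}).toReal)
        atTop (nhds 0) := by
  intro α hα ε hε
  set L := ∫ ω, Z ω ∂ν
  have hX : ∀ᶠ n in atTop, Integrable (X n 0) (μ n) := eventually_atTop.2 ⟨1, hint⟩
  have hrow n : ∀ i < n, IdentDistrib (X n i) (X n 0) (μ n) (μ n) := fun i hi =>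
    ⟨(hmeas n i).aemeasurable, (hmeas n 0).aemeasurable, hident n i hi⟩
  refine tendsto_order.2 ⟨fun a ha => .of_forall fun n => ha.trans_le ENNReal.toReal_nonneg,
    fun δ hδ => ?_⟩
  have hsmall : Tendsto (fun c : ℝ => c ^ (α - 1) * (L + 1) / ε) (𝓝[>] 0) (𝓝 0) := by
    refine Tendsto.mono_left ?_ nhdsWithin_le_nhds
    simpa [Real.zero_rpow (by linarith : α - 1 ≠ 0)] using
      ((Real.continuousAt_rpow_const 0 (α - 1) (.inr (by linarith))).tendsto.mul_const
        (L + 1)).div_const ε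
  obtain ⟨c, hcδ, hc⟩ :=
    ((hsmall.eventually_lt_const (half_pos hδ)).and self_mem_nhdsWithin).exists
  filter_upwards [(tendsto_mul_measureReal_ge_mul (fun n => hnonneg n 0) hX hZint hdistr hmean
      hc).eventually_lt_const (half_pos hδ), hmean.eventually_lt_const (lt_add_one L), hX,
    eventually_gt_atTop 0] with n htail hmeann hXn hn
  calc _ ≤ n * (μ n).real {ω | c * n ≤ X n 0 ω} + c ^ (α - 1) * (∫ ω, X n 0 ω ∂(μ n)) / ε :=
        measureReal_lt_rpow_neg_mul_sum_rpow_le hn (hnonneg n) (hrow n) hXn hα.le hε hc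
    _ < δ / 2 + δ / 2 := add_lt_add_of_lt_of_le htail <|
        (by gcongr : c ^ (α - 1) * (∫ ω, X n 0 ω ∂(μ n)) / ε ≤ _).trans hcδ.le
    _ = δ := add_halves δ

/-- Triangular array: rows of i.i.d. nonnegative random variables `X n 0, …, X n (n-1)`
with finite mean, with `X n 0` converging in distribution to `Z`, `E Z < ∞`, and
`E (X n 0) → E Z`.  Then for every `α > 1` the normalized sum
`S_α = n^{-α} ∑ᵢ (X n i)^α` converges to `0` in probability. -/
theorem stmt_5 {Ω : ℕ → Type*} [∀ n, MeasurableSpace (Ω n)]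
    (μ : ∀ n, Measure (Ω n)) [∀ n, IsProbabilityMeasure (μ n)]
    {Ω' : Type*} [MeasurableSpace Ω'] (ν : Measure Ω') [IsProbabilityMeasure ν]
    (X : (n : ℕ) → ℕ → Ω n → ℝ) (Z : Ω' → ℝ)
    (hmeas : ∀ n i, Measurable (X n i))
    (hnonneg : ∀ n i ω, 0 ≤ X n i ω)
    (hindep : ∀ n, iIndepFun (fun i : Fin n => X n i.1) (μ n))
    (hident : ∀ n, ∀ i < n, (μ n).map (X n i) = (μ n).map (X n 0))
    (hint : ∀ n, 0 < n → Integrable (X n 0) (μ n))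
    (hZmeas : Measurable Z) (hZint : Integrable Z ν)
    (hdistr : ∀ f : BoundedContinuousFunction ℝ ℝ,
      Tendsto (fun n => ∫ ω, f (X n 0 ω) ∂(μ n)) atTop (nhds (∫ ω, f (Z ω) ∂ν)))
    (hmean : Tendsto (fun n => ∫ ω, X n 0 ω ∂(μ n)) atTop (nhds (∫ ω, Z ω ∂ν))) :
    ∀ α : ℝ, 1 < α → ∀ ε : ℝ, 0 < ε →
      Tendsto (fun n =>
          ((μ n) {ω | ε < (n : ℝ) ^ (-α) * ∑ i ∈ Finset.range n, X n i ω ^ α}).toReal)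
        atTop (nhds 0) :=
  stmt_5_general μ ν X Z hmeas hnonneg hident hint hZint hdistr hmean
end

section
/- Let $m$ be even, $s = m/2$, and $x = (\varepsilon + 1/2)m$ for a fixed small constant $\varepsilon \in (0, 0.1)$ with $\varepsilon m$ an integer. Let $p'_r = \binom{x}{r}\binom{m-x}{x-r}\binom{m}{x}^{-1}$ denote the hypergeometric probability that two independent uniform random $x$-subsets of an $m$-set intersect in exactly $r$ elements. Then for all $k \ge 1$, $p'_{s+k}/p'_s \le B_\varepsilon^k$ where $B_\varepsilon = 4\varepsilon^2/(1-4\varepsilon)$. -/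
/-! Write `x = s + e`, so `e = εm = 2εs`. Consecutive intersection probabilities satisfy
`p'_{s+k+1} / p'_{s+k} = (e - k)² / ((s + k + 1)(s - 2e + k + 1)) ≤ e² / (s(s - 2e))`,
and `e² / (s(s - 2e)) = 4ε² / (1 - 4ε) = B_ε`; iterating from `k = 0` gives the bound. -/

lemma Nat.choose_succ_mul_choose_sub_succ_mul (a b x r : ℕ) (hr : r < x) :
    a.choose (r + 1) * b.choose (x - (r + 1)) * ((r + 1) * (b + r + 1 - x)) =
      a.choose r * b.choose (x - r) * ((a - r) * (x - r)) := by
  have hb := Nat.choose_succ_right_eq b (x - (r + 1))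
  rw [show x - (r + 1) + 1 = x - r by omega, show b - (x - (r + 1)) = b + r + 1 - x by omega]
    at hb
  calc _ = a.choose (r + 1) * (r + 1) * (b.choose (x - (r + 1)) * (b + r + 1 - x)) := by ring
    _ = a.choose r * (a - r) * (b.choose (x - r) * (x - r)) := by
      rw [Nat.choose_succ_right_eq, hb]
    _ = _ := by ring

lemma choose_add_mul_choose_sub_succ_le (s e k : ℕ) (h2e : 2 * e ≤ s) :
    (s + e).choose (s + (k + 1)) * (s - e).choose (e - (k + 1)) * (s * (s - 2 * e)) ≤
      e ^ 2 * ((s + e).choose (s + k) * (s - e).choose (e - k)) := by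
  rcases lt_or_ge k e with hk | hk
  · have key := Nat.choose_succ_mul_choose_sub_succ_mul (s + e) (s - e) (s + e) (s + k) (by omega)
    rw [show s - e + (s + k) + 1 - (s + e) = s - 2 * e + k + 1 by omega,
      show s + e - (s + k) = e - k by omega, show s + e - (s + k + 1) = e - (k + 1) by omega,
      add_assoc s k 1] at key
    calc _ ≤ (s + e).choose (s + (k + 1)) * (s - e).choose (e - (k + 1)) *
          ((s + k + 1) * (s - 2 * e + k + 1)) := by gcongr <;> omega
      _ = (s + e).choose (s + k) * (s - e).choose (e - k) * ((e - k) * (e - k)) := key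
      _ ≤ _ := by rw [mul_comm, sq]; gcongr <;> omega
  · simp [Nat.choose_eq_zero_of_lt (show s + e < s + (k + 1) by omega)]

lemma cast_choose_add_mul_choose_sub_succ_le (s e k : ℕ) (h2e : 2 * e < s) :
    ((s + e).choose (s + (k + 1)) * (s - e).choose (e - (k + 1)) : ℝ) ≤
      (e : ℝ) ^ 2 / (s * (s - 2 * e : ℕ)) * ((s + e).choose (s + k) * (s - e).choose (e - k)) := by
  have hpos : (0 : ℝ) < s * (s - 2 * e : ℕ) := by
    have : 0 < s * (s - 2 * e) := Nat.mul_pos (by omega) (by omega)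
    exact_mod_cast this
  rw [div_mul_eq_mul_div, le_div_iff₀ hpos]
  exact_mod_cast choose_add_mul_choose_sub_succ_le s e k h2e.le

lemma four_mul_sq_div_one_sub_four_mul_eq {ε : ℝ} {s e : ℕ} (hs : 0 < s)
    (he : (e : ℝ) = 2 * ε * s) (h2e : 2 * e ≤ s) :
    4 * ε ^ 2 / (1 - 4 * ε) = (e : ℝ) ^ 2 / (s * (s - 2 * e : ℕ)) := by
  have hden : (s : ℝ) * (s - 2 * e : ℕ) = s ^ 2 * (1 - 4 * ε) := by
    rw [Nat.cast_sub h2e]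
    push_cast
    rw [he]
    ring
  rw [hden, he, show (2 * ε * s) ^ 2 = (s : ℝ) ^ 2 * (4 * ε ^ 2) by ring,
    mul_div_mul_left _ _ (by positivity)]

/-- Hypergeometric ratio bound: with `m = 2s` even, `x = (ε + 1/2)m` for `ε ∈ (0, 0.1)`
(with `εm = e` an integer), and `p'_r = C(x,r)·C(m-x, x-r)/C(m,x)` the probability that two
independent uniform `x`-subsets of an `m`-set meet in exactly `r` elements, one has
`p'_{s+k}/p'_s ≤ B_ε^k` for all `k ≥ 1`, where `B_ε = 4ε²/(1-4ε)`. -/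
theorem stmt_11 (m s x e : ℕ) (ε : ℝ) (hm : m = 2 * s) (hs : 0 < s)
    (hε : ε ∈ Set.Ioo (0 : ℝ) 0.1) (he : (e : ℝ) = ε * m) (hx : x = s + e) :
    ∀ k : ℕ, 1 ≤ k →
      (((x.choose (s + k) : ℝ) * ((m - x).choose (x - (s + k)) : ℝ)) / (m.choose x : ℝ)) /
        (((x.choose s : ℝ) * ((m - x).choose (x - s) : ℝ)) / (m.choose x : ℝ)) ≤
      (4 * ε ^ 2 / (1 - 4 * ε)) ^ k := by
  intro k _
  obtain ⟨hε0, hε1⟩ := hε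
  have hsR : (0 : ℝ) < s := by exact_mod_cast hs
  have he' : (e : ℝ) = 2 * ε * s := by rw [he, hm]; push_cast; ring
  have h2e : 2 * e < s := by exact_mod_cast (show (2 * e : ℝ) < s by norm_num at hε1; nlinarith)
  subst hm hx
  have htotal : ((2 * s).choose (s + e) : ℝ) ≠ 0 :=
    Nat.cast_ne_zero.2 (Nat.choose_pos (by omega)).ne'
  have hcentral : (0 : ℝ) < (s + e).choose s * (s - e).choose e := by
    have := Nat.choose_pos (show s ≤ s + e by omega)
    have := Nat.choose_pos (show e ≤ s - e by omega)
    positivity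
  rw [show 2 * s - (s + e) = s - e by omega, show s + e - s = e by omega,
    show s + e - (s + k) = e - k by omega, div_div_div_cancel_right₀ htotal,
    div_le_iff₀ hcentral, four_mul_sq_div_one_sub_four_mul_eq hs he' h2e.le]
  exact le_geom (u := fun k => ((s + e).choose (s + k) * (s - e).choose (e - k) : ℝ))
    (by positivity) k fun j _ => cast_choose_add_mul_choose_sub_succ_le s e j h2e
end
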